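/- arXiv:1409.5138 — 5 statements merged into one kernel-verified Lean document; each statement's English description precedes it below -/
import Mathlib

section
/- Let d ≥ 1 and let u : ℝ^d → ℝ^d be a smooth compactly supported vector field. Then ∫_{ℝ^d} |∇u(x)|² dx ≤ 2 ∫_{ℝ^d} |∇^s u(x)|² dx (Korn's inequality). -/
open MeasureTheory Matrix

/-- Jacobian matrix `(∇u)_{ij} = ∂u_i/∂x_j`. -/
noncomputable def jac {d : ℕ} (u : (Fin d → ℝ) → (Fin d → ℝ)) (x : Fin d → ℝ) :
    Matrix (Fin d) (Fin d) ℝ :=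
  Matrix.of fun i j => fderiv ℝ u x (Pi.single j 1) i

/-- Symmetric gradient `∇^s u = ½(∇u + (∇u)ᵗ)`. -/
noncomputable def symGrad {d : ℕ} (u : (Fin d → ℝ) → (Fin d → ℝ)) (x : Fin d → ℝ) :
    Matrix (Fin d) (Fin d) ℝ :=
  (1 / 2 : ℝ) • (jac u x + (jac u x)ᵀ)

/-- Frobenius inner product `A : B = Σ_{ij} A_{ij} B_{ij}`. -/
def frob {d : ℕ} (A B : Matrix (Fin d) (Fin d) ℝ) : ℝ := ∑ i, ∑ j, A i j * B i j

section KornAux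

variable {d : ℕ}

lemma pd_contDiff {f : (Fin d → ℝ) → ℝ} (hf : ContDiff ℝ (⊤ : ℕ∞) f) (v : Fin d → ℝ) :
    ContDiff ℝ (⊤ : ℕ∞) fun x => fderiv ℝ f x v :=
  (hf.fderiv_right (by simp)).clm_apply contDiff_const

lemma pd_hcs {f : (Fin d → ℝ) → ℝ} (hf : HasCompactSupport f) (v : Fin d → ℝ) :
    HasCompactSupport fun x => fderiv ℝ f x v :=
  hf.fderiv_apply ℝ v

lemma ibp {f g : (Fin d → ℝ) → ℝ} (hf : ContDiff ℝ (⊤ : ℕ∞) f) (hf' : HasCompactSupport f)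
    (hg : ContDiff ℝ (⊤ : ℕ∞) g) (hg' : HasCompactSupport g) (v : Fin d → ℝ) :
    ∫ x, fderiv ℝ f x v * g x = -∫ x, f x * fderiv ℝ g x v := by
  obtain ⟨C, hC⟩ := ContDiff.lipschitzWith_of_hasCompactSupport hf' hf (by simp)
  obtain ⟨D, hD⟩ := ContDiff.lipschitzWith_of_hasCompactSupport hg' hg (by simp)
  have h := hC.integral_lineDeriv_mul_eq hD hg' v (μ := volume)
  have hfd := hf.differentiable (by simp)
  have hgd := hg.differentiable (by simp)
  have e1 : ∀ x, lineDeriv ℝ f x v = fderiv ℝ f x v := fun x => (hfd x).lineDeriv_eq_fderiv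
  have e2 : ∀ x, lineDeriv ℝ g x (-v) = fderiv ℝ g x (-v) := fun x => (hgd x).lineDeriv_eq_fderiv
  simp only [e1, e2] at h
  rw [h, ← integral_neg]
  congr 1; ext x; rw [map_neg]; ring

lemma fderiv_swap {f : (Fin d → ℝ) → ℝ} (hf : ContDiff ℝ (⊤ : ℕ∞) f) (v w x : Fin d → ℝ) :
    fderiv ℝ (fun y => fderiv ℝ f y v) x w = fderiv ℝ (fun y => fderiv ℝ f y w) x v := by
  have hsym := (hf.contDiffAt (x := x)).isSymmSndFDerivAt (by rw [minSmoothness_of_isRCLikeNormedField]; exact WithTop.coe_le_coe.mpr le_top)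
  have hd : DifferentiableAt ℝ (fderiv ℝ f) x :=
    ((hf.fderiv_right (m := 1) (by exact WithTop.coe_le_coe.mpr le_top)).differentiable one_ne_zero) x
  have h1 : ∀ z : Fin d → ℝ, fderiv ℝ (fun y => fderiv ℝ f y z) x
      = (fderiv ℝ (fderiv ℝ f) x).flip z := by
    intro z
    rw [fderiv_clm_apply hd (differentiableAt_const z)]
    simp
  rw [h1 v, h1 w]
  exact hsym w v

lemma sum_symm_sq (g : Fin d → Fin d → ℝ) :
    ∑ i, ∑ j, (1/2*(g i j + g j i))*(1/2*(g i j + g j i))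
      = (1/2)*(∑ i, ∑ j, g i j * g i j) + (1/2)*(∑ i, ∑ j, g i j * g j i) := by
  have h1 : ∀ i j : Fin d, (1/2*(g i j + g j i))*(1/2*(g i j + g j i))
      = (1/4)*(g i j*g i j) + ((1/4)*(g j i*g j i) + (1/2)*(g i j*g j i)) := fun i j => by ring
  simp_rw [h1, Finset.sum_add_distrib, ← Finset.mul_sum]
  have h2 : ∑ i : Fin d, ∑ j : Fin d, g j i * g j i = ∑ i : Fin d, ∑ j : Fin d, g i j * g i j :=
    Finset.sum_comm
  rw [h2]
  ring

end KornAux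

/-- **Korn's inequality**: for a smooth compactly supported vector field `u : ℝ^d → ℝ^d`,
`∫ |∇u|² ≤ 2 ∫ |∇^s u|²`. -/
theorem korn_inequality (d : ℕ) (hd : 1 ≤ d)
    (u : (Fin d → ℝ) → (Fin d → ℝ)) (hu : ContDiff ℝ (⊤ : ℕ∞) u) (hc : HasCompactSupport u) :
    ∫ x : Fin d → ℝ, frob (jac u x) (jac u x) ≤
      2 * ∫ x : Fin d → ℝ, frob (symGrad u x) (symGrad u x) := by
  have hp : ∀ i, ContDiff ℝ (⊤ : ℕ∞) (fun x => u x i) := fun i => contDiff_pi.mp hu i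
  have hpc : ∀ i, HasCompactSupport (fun x => u x i) :=
    fun i => hc.comp_left (g := fun y : Fin d → ℝ => y i) rfl
  set pa : Fin d → Fin d → (Fin d → ℝ) → ℝ :=
    fun i j x => fderiv ℝ (fun y => u y i) x (Pi.single j 1) with hpa
  have hcont : ∀ i j, Continuous (pa i j) := fun i j => (pd_contDiff (hp i) _).continuous
  have hsupp : ∀ i j, HasCompactSupport (pa i j) := fun i j => pd_hcs (hpc i) _
  have hint : ∀ i j k l, Integrable (fun x => pa i j x * pa k l x) := fun i j k l =>
    ((hcont i j).mul (hcont k l)).integrable_of_hasCompactSupport ((hsupp k l).mul_left)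
  have hentry : ∀ (x : Fin d → ℝ) i j, jac u x i j = pa i j x := by
    intro x i j
    have hdu : DifferentiableAt ℝ u x := hu.differentiable (by simp) x
    have h := ((ContinuousLinearMap.proj (R := ℝ) (φ := fun _ : Fin d => ℝ)
      i).hasFDerivAt.comp x hdu.hasFDerivAt).fderiv
    have h2 : pa i j x = fderiv ℝ ((ContinuousLinearMap.proj (R := ℝ)
        (φ := fun _ : Fin d => ℝ) i) ∘ u) x (Pi.single j 1) := rfl
    rw [h2, h]
    rfl
  -- the key integration-by-parts swap
  have hswap : ∀ i j, ∫ x, pa i j x * pa j i x = ∫ x, pa i i x * pa j j x := by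
    intro i j
    have h1 := ibp (hp i) (hpc i) (pd_contDiff (hp j) (Pi.single i 1))
      (pd_hcs (hpc j) (Pi.single i 1)) (Pi.single j 1)
    have h2 := ibp (hp i) (hpc i) (pd_contDiff (hp j) (Pi.single j 1))
      (pd_hcs (hpc j) (Pi.single j 1)) (Pi.single i 1)
    have h3 : ∀ x : Fin d → ℝ,
        fderiv ℝ (fun y => fderiv ℝ (fun z => u z j) y (Pi.single i 1)) x (Pi.single j 1)
        = fderiv ℝ (fun y => fderiv ℝ (fun z => u z j) y (Pi.single j 1)) x (Pi.single i 1) :=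
      fun x => fderiv_swap (hp j) _ _ x
    simp only [h3] at h1
    calc ∫ x, pa i j x * pa j i x
        = -∫ x, u x i * fderiv ℝ (fun y => fderiv ℝ (fun z => u z j) y
            (Pi.single j 1)) x (Pi.single i 1) := h1
      _ = ∫ x, pa i i x * pa j j x := h2.symm
  have hjacx : ∀ x, frob (jac u x) (jac u x) = ∑ i, ∑ j, pa i j x * pa i j x := by
    intro x
    simp only [frob, hentry x]
  have hsymx : ∀ x, frob (symGrad u x) (symGrad u x)
      = (1/2)*(∑ i, ∑ j, pa i j x * pa i j x) + (1/2)*(∑ i, ∑ j, pa i j x * pa j i x) := by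
    intro x
    have he : ∀ i j, symGrad u x i j = 1/2 * (pa i j x + pa j i x) := by
      intro i j
      simp [symGrad, Matrix.smul_apply, Matrix.add_apply, Matrix.transpose_apply,
        smul_eq_mul, hentry x]
    simp only [frob, he]
    exact sum_symm_sq (fun i j => pa i j x)
  have intS1 : Integrable (fun x => ∑ i, ∑ j, pa i j x * pa i j x) :=
    integrable_finset_sum _ fun i _ => integrable_finset_sum _ fun j _ => hint i j i j
  have intS2 : Integrable (fun x => ∑ i, ∑ j, pa i j x * pa j i x) :=
    integrable_finset_sum _ fun i _ => integrable_finset_sum _ fun j _ => hint i j j i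
  have hIjac : ∫ x, frob (jac u x) (jac u x) = ∫ x, ∑ i, ∑ j, pa i j x * pa i j x := by
    simp_rw [hjacx]
  have hIsym : ∫ x, frob (symGrad u x) (symGrad u x)
      = (1/2)*(∫ x, ∑ i, ∑ j, pa i j x * pa i j x)
        + (1/2)*(∫ x, ∑ i, ∑ j, pa i j x * pa j i x) := by
    simp_rw [hsymx]
    rw [integral_add (intS1.const_mul _) (intS2.const_mul _), integral_const_mul,
      integral_const_mul]
  have hB : ∫ x, ∑ i, ∑ j, pa i j x * pa j i x = ∑ i, ∑ j, ∫ x, pa i j x * pa j i x := by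
    rw [integral_finset_sum _ fun i _ => integrable_finset_sum _ fun j _ => hint i j j i]
    exact Finset.sum_congr rfl fun i _ => integral_finset_sum _ fun j _ => hint i j j i
  have hBC : ∑ i, ∑ j, ∫ x, pa i j x * pa j i x = ∑ i, ∑ j, ∫ x, pa i i x * pa j j x :=
    Finset.sum_congr rfl fun i _ => Finset.sum_congr rfl fun j _ => hswap i j
  have hC : (0:ℝ) ≤ ∑ i, ∑ j, ∫ x, pa i i x * pa j j x := by
    have he : ∫ x, (∑ i, pa i i x) * (∑ j, pa j j x)
        = ∑ i, ∑ j, ∫ x, pa i i x * pa j j x := by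
      simp_rw [Finset.sum_mul, Finset.mul_sum]
      rw [integral_finset_sum _ fun i _ => integrable_finset_sum _ fun j _ => hint i i j j]
      exact Finset.sum_congr rfl fun i _ => integral_finset_sum _ fun j _ => hint i i j j
    rw [← he]
    exact integral_nonneg fun x => mul_self_nonneg _
  rw [hIjac, hIsym, hB, hBC]
  linarith [hC]
end

section
/- Let d ≥ 1 and let u : ℝ^d → ℝ^d be a smooth compactly supported vector field. Then ∫_{ℝ^d} ∇u(x) : (∇u(x))ᵗ dx = ∫_{ℝ^d} (div u(x))² dx. -/
open MeasureTheory Matrix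

section aux

variable {d : ℕ}

lemma comp_support {f : (Fin d → ℝ) → ℝ} (hf : ContDiff ℝ (⊤ : ℕ∞) f)
    (hcf : HasCompactSupport f) (v : Fin d → ℝ) :
    HasCompactSupport (fun x => fderiv ℝ f x v) := by
  have h1 : HasCompactSupport (fderiv ℝ f) := hcf.fderiv ℝ
  exact h1.comp_left (g := fun L : (Fin d → ℝ) →L[ℝ] ℝ => L v) (by simp)

lemma contDiff_fderiv_apply {f : (Fin d → ℝ) → ℝ} (hf : ContDiff ℝ (⊤ : ℕ∞) f) (v : Fin d → ℝ) :
    ContDiff ℝ (⊤ : ℕ∞) (fun x => fderiv ℝ f x v) := by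
  have h : ContDiff ℝ (⊤ : ℕ∞) (fderiv ℝ f) := hf.fderiv_right (by simp)
  exact (ContinuousLinearMap.apply ℝ ℝ v).contDiff.comp h

lemma ibp_one {f g : (Fin d → ℝ) → ℝ} (hf : ContDiff ℝ (⊤ : ℕ∞) f) (hg : ContDiff ℝ (⊤ : ℕ∞) g)
    (hcf : HasCompactSupport f) (hcg : HasCompactSupport g) (v w : Fin d → ℝ) :
    ∫ x, fderiv ℝ f x v * fderiv ℝ g x w =
      - ∫ x, fderiv ℝ (fun y => fderiv ℝ f y v) x w * g x := by
  set F := fun x => fderiv ℝ f x v with hF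
  have hFc : ContDiff ℝ (⊤ : ℕ∞) F := contDiff_fderiv_apply hf v
  have hFs : HasCompactSupport F := comp_support hf hcf v
  have int1 : Integrable (fun x => fderiv ℝ F x w * g x) :=
    ((contDiff_fderiv_apply hFc w).continuous.mul hg.continuous).integrable_of_hasCompactSupport
      (((comp_support hFc hFs w)).mul_right)
  have int2 : Integrable (fun x => F x * fderiv ℝ g x w) :=
    (hFc.continuous.mul (contDiff_fderiv_apply hg w).continuous).integrable_of_hasCompactSupport
      (hFs.mul_right)
  have int3 : Integrable (fun x => F x * g x) :=
    (hFc.continuous.mul hg.continuous).integrable_of_hasCompactSupport hFs.mul_right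
  exact integral_mul_fderiv_eq_neg_fderiv_mul_of_integrable int1 int2 int3
    (fun x _ => hFc.differentiable (by simp) x) (fun x _ => hg.differentiable (by simp) x)

lemma snd_deriv_swap {f : (Fin d → ℝ) → ℝ} (hf : ContDiff ℝ (⊤ : ℕ∞) f) (v w : Fin d → ℝ) (x : Fin d → ℝ) :
    fderiv ℝ (fun y => fderiv ℝ f y v) x w = fderiv ℝ (fun y => fderiv ℝ f y w) x v := by
  have hdf : Differentiable ℝ f := hf.differentiable (by simp)
  have hdf2 : Differentiable ℝ (fderiv ℝ f) := (hf.fderiv_right ((by simp)) : ContDiff ℝ (⊤ : ℕ∞) _).differentiable (by simp)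
  have h1 : ∀ u : Fin d → ℝ, fderiv ℝ (fun y => fderiv ℝ f y u) x =
      (fderiv ℝ (fderiv ℝ f) x).flip u := by
    intro u
    have := fderiv_clm_apply (c := fderiv ℝ f) (u := fun _ : Fin d → ℝ => u)
      (hdf2.differentiableAt (x := x)) (differentiableAt_const (x := x) u)
    simpa using this
  rw [h1 v, h1 w]
  simp only [ContinuousLinearMap.flip_apply]
  exact second_derivative_symmetric (fun y => (hdf y).hasFDerivAt)
    (hdf2 x).hasFDerivAt w v

lemma ibp_swap {f g : (Fin d → ℝ) → ℝ} (hf : ContDiff ℝ (⊤ : ℕ∞) f) (hg : ContDiff ℝ (⊤ : ℕ∞) g)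
    (hcf : HasCompactSupport f) (hcg : HasCompactSupport g) (v w : Fin d → ℝ) :
    ∫ x, fderiv ℝ f x v * fderiv ℝ g x w = ∫ x, fderiv ℝ f x w * fderiv ℝ g x v := by
  rw [ibp_one hf hg hcf hcg v w, ibp_one hf hg hcf hcg w v]
  congr 1
  apply integral_congr_ae
  filter_upwards with x
  rw [snd_deriv_swap hf v w x]

end aux

/-- Divergence `div u = Σ_i ∂u_i/∂x_i`. -/
noncomputable def divg {d : ℕ} (u : (Fin d → ℝ) → (Fin d → ℝ)) (x : Fin d → ℝ) : ℝ :=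
  ∑ i, jac u x i i

/-- For a smooth compactly supported vector field `u : ℝ^d → ℝ^d`,
`∫ ∇u : (∇u)ᵗ = ∫ (div u)²`. -/
theorem integral_grad_inner_grad_transpose (d : ℕ) (hd : 1 ≤ d)
    (u : (Fin d → ℝ) → (Fin d → ℝ)) (hu : ContDiff ℝ (⊤ : ℕ∞) u) (hc : HasCompactSupport u) :
    ∫ x : Fin d → ℝ, frob (jac u x) (jac u x)ᵀ = ∫ x : Fin d → ℝ, (divg u x) ^ 2 := by
  have hui : ∀ i, ContDiff ℝ (⊤ : ℕ∞) (fun x => u x i) := fun i =>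
    (ContinuousLinearMap.proj (R := ℝ) (φ := fun _ : Fin d => ℝ) i).contDiff.comp hu
  have hci : ∀ i, HasCompactSupport (fun x => u x i) := fun i =>
    hc.comp_left (g := fun y : Fin d → ℝ => y i) rfl
  set P : Fin d → Fin d → (Fin d → ℝ) → ℝ :=
    fun i j x => fderiv ℝ (fun y => u y i) x (Pi.single j 1) with hP
  have hPd : ∀ i j x, jac u x i j = P i j x := by
    intro i j x
    simp only [jac, Matrix.of_apply, hP]
    rw [show (fun y => u y i) =
        (ContinuousLinearMap.proj (R := ℝ) (φ := fun _ : Fin d => ℝ) i) ∘ u from rfl,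
      fderiv_comp x (ContinuousLinearMap.proj i).differentiableAt
        ((hu.differentiable (by simp)) x)]
    simp
  have hint : ∀ i j k l, Integrable (fun x => P i j x * P k l x) := fun i j k l =>
    ((contDiff_fderiv_apply (hui i) _).continuous.mul
      (contDiff_fderiv_apply (hui k) _).continuous).integrable_of_hasCompactSupport
      ((comp_support (hui i) (hci i) _).mul_right)
  have l1 : ∀ x, frob (jac u x) (jac u x)ᵀ = ∑ i, ∑ j, P i j x * P j i x := by
    intro x
    simp [frob, Matrix.transpose_apply, hPd]
  have l2 : ∀ x, (divg u x) ^ 2 = ∑ i, ∑ j, P i i x * P j j x := by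
    intro x
    simp only [divg, hPd, sq, Finset.sum_mul_sum]
  simp_rw [l1, l2]
  rw [integral_finset_sum _ fun i _ => integrable_finset_sum _ fun j _ => hint i j j i,
    integral_finset_sum _ fun i _ => integrable_finset_sum _ fun j _ => hint i i j j]
  refine Finset.sum_congr rfl fun i _ => ?_
  rw [integral_finset_sum _ fun j _ => hint i j j i,
    integral_finset_sum _ fun j _ => hint i i j j]
  refine Finset.sum_congr rfl fun j _ => ?_
  exact ibp_swap (hui i) (hui j) (hci i) (hci j) (Pi.single j 1) (Pi.single i 1)
end

section
/- Let d ≥ 1, ω ∈ ℝ, let μ : ℝ^d → ℝ and p : ℝ^d → ℝ be continuously differentiable, and let v : ℝ^d → ℝ^d be smooth and compactly supported with div v = 0 on ℝ^d. Write E(v) = ∇v + (∇v)ᵗ. If the Stokes equation ω² v + ∇·(μ E(v)) + ∇p = 0 holds pointwise on ℝ^d, then ½ ∫_{ℝ^d} μ(x)|E(v)(x)|² dx = ω² ∫_{ℝ^d} |v(x)|² dx. -/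
open MeasureTheory Matrix

/-- `E(v) = ∇v + (∇v)ᵗ`. -/
noncomputable def Ef {d : ℕ} (u : (Fin d → ℝ) → (Fin d → ℝ)) (x : Fin d → ℝ) :
    Matrix (Fin d) (Fin d) ℝ :=
  jac u x + (jac u x)ᵀ

/-- Gradient of a scalar function. -/
noncomputable def gradf {d : ℕ} (p : (Fin d → ℝ) → ℝ) (x : Fin d → ℝ) : Fin d → ℝ :=
  fun i => fderiv ℝ p x (Pi.single i 1)

/-- Divergence of a matrix field: `(∇·M)_i = Σ_j ∂M_{ij}/∂x_j`. -/
noncomputable def divMat {d : ℕ} (M : (Fin d → ℝ) → Matrix (Fin d) (Fin d) ℝ)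
    (x : Fin d → ℝ) : Fin d → ℝ :=
  fun i => ∑ j, fderiv ℝ (fun y => M y i j) x (Pi.single j 1)

/-- Integration by parts on `ℝ^d` when one factor is compactly supported. -/
lemma ibp_cs {d : ℕ} (f g : (Fin d → ℝ) → ℝ) (hf : ContDiff ℝ 1 f)
    (hcf : HasCompactSupport f) (hg : ContDiff ℝ 1 g) (w : Fin d → ℝ) :
    ∫ x, f x * fderiv ℝ g x w = - ∫ x, fderiv ℝ f x w * g x := by
  apply integral_mul_fderiv_eq_neg_fderiv_mul_of_integrable
  · apply Continuous.integrable_of_hasCompactSupport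
    · exact ((hf.continuous_fderiv one_ne_zero).clm_apply continuous_const).mul hg.continuous
    · exact ((hcf.fderiv ℝ).comp_left (g := fun L : (Fin d → ℝ) →L[ℝ] ℝ => L w) rfl).mul_right
  · apply Continuous.integrable_of_hasCompactSupport
    · exact hf.continuous.mul ((hg.continuous_fderiv one_ne_zero).clm_apply continuous_const)
    · exact hcf.mul_right
  · apply Continuous.integrable_of_hasCompactSupport
    · exact hf.continuous.mul hg.continuous
    · exact hcf.mul_right
  · exact fun x _ => hf.differentiable one_ne_zero x
  · exact fun x _ => hg.differentiable one_ne_zero x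

/-- Energy identity for the Stokes system: if `v` is smooth, compactly supported,
divergence free, and `ω² v + ∇·(μ E(v)) + ∇p = 0` on `ℝ^d`, then
`½ ∫ μ |E(v)|² = ω² ∫ |v|²`. -/
theorem stokes_energy_identity (d : ℕ) (hd : 1 ≤ d) (ω : ℝ)
    (μ p : (Fin d → ℝ) → ℝ) (hμ : ContDiff ℝ 1 μ) (hp : ContDiff ℝ 1 p)
    (v : (Fin d → ℝ) → (Fin d → ℝ)) (hv : ContDiff ℝ (⊤ : ℕ∞) v) (hcv : HasCompactSupport v)
    (hdiv : ∀ x, divg v x = 0)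
    (heq : ∀ x : Fin d → ℝ,
      ω ^ 2 • v x + divMat (fun y => μ y • Ef v y) x + gradf p x = 0) :
    (1 / 2) * ∫ x : Fin d → ℝ, μ x * frob (Ef v x) (Ef v x) =
      ω ^ 2 * ∫ x : Fin d → ℝ, ∑ i, (v x i) ^ 2 := by
  classical
  have hvd : Differentiable ℝ v := hv.differentiable (by simp)
  have hproj : ∀ i : Fin d, ContDiff ℝ 1 (fun x => v x i) := fun i =>
    ((ContinuousLinearMap.proj (R := ℝ) (φ := fun _ : Fin d => ℝ) i).contDiff.comp hv).of_le (by simp)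
  have hcs : ∀ i : Fin d, HasCompactSupport (fun x => v x i) := fun i =>
    hcv.comp_left (g := fun y : Fin d → ℝ => y i) rfl
  have hfd : ∀ (i : Fin d) (x w : Fin d → ℝ),
      fderiv ℝ (fun y => v y i) x w = fderiv ℝ v x w i := by
    intro i x w
    have h := ((ContinuousLinearMap.proj (R := ℝ) (φ := fun _ : Fin d => ℝ)
      i).hasFDerivAt.comp x (hvd x).hasFDerivAt).fderiv
    rw [show (fun y => v y i) =
      (ContinuousLinearMap.proj (R := ℝ) (φ := fun _ : Fin d => ℝ) i) ∘ v from rfl, h]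
    rfl
  -- smoothness of components of E
  have hE : ∀ i j : Fin d, ContDiff ℝ 1 (fun x => Ef v x i j) := by
    intro i j
    have h1 : ContDiff ℝ 1 (fun x => fderiv ℝ v x) := hv.fderiv_right (WithTop.coe_le_coe.mpr le_top)
    have h2 : ∀ (w : Fin d → ℝ) (k : Fin d), ContDiff ℝ 1 (fun x => fderiv ℝ v x w k) :=
      fun w k => (ContinuousLinearMap.proj (R := ℝ) (φ := fun _ : Fin d => ℝ)
        k).contDiff.comp (h1.clm_apply contDiff_const)
    simp only [Ef, jac, Matrix.add_apply, Matrix.transpose_apply, Matrix.of_apply]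
    exact (h2 _ i).add (h2 _ j)
  -- compact support of components of jac and E
  have hJcs : ∀ i j : Fin d, HasCompactSupport (fun x => jac v x i j) := by
    intro i j
    exact (hcv.fderiv ℝ).comp_left
      (g := fun L : (Fin d → ℝ) →L[ℝ] (Fin d → ℝ) => L (Pi.single j 1) i) rfl
  have hJc : ∀ i j : Fin d, Continuous (fun x => jac v x i j) := by
    intro i j
    exact (continuous_apply i).comp ((hv.continuous_fderiv (by simp)).clm_apply continuous_const)
  have hEc : ∀ i j : Fin d, Continuous (fun x => Ef v x i j) := fun i j => (hE i j).continuous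
  have hg : ∀ i j : Fin d, ContDiff ℝ 1 (fun x => μ x * Ef v x i j) :=
    fun i j => hμ.mul (hE i j)
  -- IBP for the viscous term
  have ibp1 : ∀ i j : Fin d,
      ∫ x, v x i * fderiv ℝ (fun y => μ y * Ef v y i j) x (Pi.single j 1)
        = - ∫ x, jac v x i j * (μ x * Ef v x i j) := by
    intro i j
    rw [ibp_cs (fun x => v x i) (fun x => μ x * Ef v x i j)
      (hproj i) (hcs i) (hg i j) (Pi.single j 1)]
    have h : (fun x => fderiv ℝ (fun y => v y i) x (Pi.single j 1) * (μ x * Ef v x i j))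
        = fun x => jac v x i j * (μ x * Ef v x i j) := by
      funext x; rw [hfd]; rfl
    rw [h]
  -- IBP for the pressure term
  have ibp2 : ∀ i : Fin d,
      ∫ x, v x i * fderiv ℝ p x (Pi.single i 1) = - ∫ x, jac v x i i * p x := by
    intro i
    rw [ibp_cs (fun x => v x i) p (hproj i) (hcs i) hp (Pi.single i 1)]
    have h : (fun x => fderiv ℝ (fun y => v y i) x (Pi.single i 1) * p x)
        = fun x => jac v x i i * p x := by
      funext x; rw [hfd]; rfl
    rw [h]
  -- pointwise identity from the PDE
  have key : ∀ x, ω ^ 2 * (∑ i, v x i ^ 2)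
      + (∑ i, ∑ j, v x i * fderiv ℝ (fun y => μ y * Ef v y i j) x (Pi.single j 1))
      + (∑ i, v x i * fderiv ℝ p x (Pi.single i 1)) = 0 := by
    intro x
    have h1 : ∀ i : Fin d, ω ^ 2 * v x i
        + (∑ j, fderiv ℝ (fun y => μ y * Ef v y i j) x (Pi.single j 1))
        + fderiv ℝ p x (Pi.single i 1) = 0 := by
      intro i
      have h0 := congrFun (heq x) i
      simpa [divMat, gradf, Pi.add_apply, Pi.smul_apply, smul_eq_mul,
        Matrix.smul_apply] using h0
    have h2 : ∑ i, v x i * (ω ^ 2 * v x i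
        + (∑ j, fderiv ℝ (fun y => μ y * Ef v y i j) x (Pi.single j 1))
        + fderiv ℝ p x (Pi.single i 1)) = 0 := by
      simp [h1]
    have hA : ω ^ 2 * (∑ i, v x i ^ 2) = ∑ i, v x i * (ω ^ 2 * v x i) := by
      rw [Finset.mul_sum]; exact Finset.sum_congr rfl fun i _ => by ring
    rw [hA]
    simpa [mul_add, Finset.mul_sum, Finset.sum_add_distrib] using h2
  -- continuity of derivative factors
  have hgc : ∀ i j : Fin d,
      Continuous (fun x => fderiv ℝ (fun y => μ y * Ef v y i j) x (Pi.single j 1)) :=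
    fun i j => ((hg i j).continuous_fderiv one_ne_zero).clm_apply continuous_const
  have hpc : ∀ i : Fin d, Continuous (fun x => fderiv ℝ p x (Pi.single i 1)) :=
    fun i => (hp.continuous_fderiv one_ne_zero).clm_apply continuous_const
  -- integrability
  have intB : ∀ i j : Fin d, Integrable
      (fun x => v x i * fderiv ℝ (fun y => μ y * Ef v y i j) x (Pi.single j 1)) :=
    fun i j => (((hproj i).continuous).mul (hgc i j)).integrable_of_hasCompactSupport
      (hcs i).mul_right
  have intC : ∀ i : Fin d, Integrable (fun x => v x i * fderiv ℝ p x (Pi.single i 1)) :=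
    fun i => (((hproj i).continuous).mul (hpc i)).integrable_of_hasCompactSupport
      (hcs i).mul_right
  have intvv : ∀ i : Fin d, Integrable (fun x => v x i ^ 2) := by
    intro i
    have h : (fun x : Fin d → ℝ => v x i ^ 2) = fun x => v x i * v x i := by
      funext x; ring
    rw [h]
    exact (((hproj i).continuous).mul ((hproj i).continuous)).integrable_of_hasCompactSupport
      (hcs i).mul_right
  have intS : Integrable (fun x : Fin d → ℝ => ∑ i, v x i ^ 2) :=
    integrable_finset_sum _ fun i _ => intvv i
  have intA : Integrable (fun x : Fin d → ℝ => ω ^ 2 * ∑ i, v x i ^ 2) := intS.const_mul _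
  have intB' : Integrable (fun x => ∑ i, ∑ j : Fin d,
      v x i * fderiv ℝ (fun y => μ y * Ef v y i j) x (Pi.single j 1)) :=
    integrable_finset_sum _ fun i _ => integrable_finset_sum _ fun j _ => intB i j
  have intC' : Integrable (fun x => ∑ i : Fin d,
      v x i * fderiv ℝ p x (Pi.single i 1)) :=
    integrable_finset_sum _ fun i _ => intC i
  have intJ : ∀ i j : Fin d, Integrable (fun x => jac v x i j * (μ x * Ef v x i j)) :=
    fun i j => ((hJc i j).mul (hμ.continuous.mul (hEc i j))).integrable_of_hasCompactSupport
      (hJcs i j).mul_right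
  have intJp : ∀ i : Fin d, Integrable (fun x => jac v x i i * p x) :=
    fun i => ((hJc i i).mul hp.continuous).integrable_of_hasCompactSupport
      (hJcs i i).mul_right
  -- integrate the pointwise identity
  have hint : (∫ x : Fin d → ℝ, ω ^ 2 * ∑ i, v x i ^ 2)
      + (∫ x, ∑ i, ∑ j : Fin d,
          v x i * fderiv ℝ (fun y => μ y * Ef v y i j) x (Pi.single j 1))
      + (∫ x, ∑ i : Fin d, v x i * fderiv ℝ p x (Pi.single i 1)) = 0 := by
    have hz : ∫ x : Fin d → ℝ, (ω ^ 2 * (∑ i, v x i ^ 2)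
        + (∑ i, ∑ j, v x i * fderiv ℝ (fun y => μ y * Ef v y i j) x (Pi.single j 1))
        + (∑ i, v x i * fderiv ℝ p x (Pi.single i 1))) = 0 := by
      simp only [key]
      simp
    have intAB : Integrable (fun x : Fin d → ℝ => ω ^ 2 * (∑ i, v x i ^ 2)
        + (∑ i, ∑ j, v x i * fderiv ℝ (fun y => μ y * Ef v y i j) x (Pi.single j 1))) :=
      intA.add intB'
    rw [integral_add intAB intC', integral_add intA intB'] at hz
    exact hz
  -- symmetry facts about E
  have hsym : ∀ (x : Fin d → ℝ) (i j : Fin d), Ef v x i j = Ef v x j i := by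
    intro x i j
    simp only [Ef, Matrix.add_apply, Matrix.transpose_apply]
    ring
  have hEJ : ∀ (x : Fin d → ℝ) (i j : Fin d),
      Ef v x i j = jac v x i j + jac v x j i := by
    intro x i j
    simp [Ef, Matrix.add_apply, Matrix.transpose_apply]
  -- pointwise Frobenius identity
  have hfro : ∀ x, ∑ i, ∑ j : Fin d, jac v x i j * (μ x * Ef v x i j)
      = 1 / 2 * (μ x * frob (Ef v x) (Ef v x)) := by
    intro x
    have hT : ∑ i, ∑ j : Fin d, jac v x j i * Ef v x i j
        = ∑ i, ∑ j : Fin d, jac v x i j * Ef v x i j := by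
      rw [Finset.sum_comm]
      exact Finset.sum_congr rfl fun i _ => Finset.sum_congr rfl fun j _ => by
        rw [hsym x i j]
    have hfr : frob (Ef v x) (Ef v x)
        = 2 * ∑ i, ∑ j : Fin d, jac v x i j * Ef v x i j := by
      unfold frob
      calc ∑ i, ∑ j : Fin d, Ef v x i j * Ef v x i j
          = ∑ i, ∑ j : Fin d,
              (jac v x i j * Ef v x i j + jac v x j i * Ef v x i j) := by
            refine Finset.sum_congr rfl fun i _ => Finset.sum_congr rfl fun j _ => ?_
            rw [hEJ x i j]; ring
        _ = (∑ i, ∑ j : Fin d, jac v x i j * Ef v x i j)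
              + ∑ i, ∑ j : Fin d, jac v x j i * Ef v x i j := by
            simp [Finset.sum_add_distrib]
        _ = 2 * ∑ i, ∑ j : Fin d, jac v x i j * Ef v x i j := by rw [hT]; ring
    calc ∑ i, ∑ j : Fin d, jac v x i j * (μ x * Ef v x i j)
        = μ x * ∑ i, ∑ j : Fin d, jac v x i j * Ef v x i j := by
          rw [Finset.mul_sum]
          refine Finset.sum_congr rfl fun i _ => ?_
          rw [Finset.mul_sum]
          exact Finset.sum_congr rfl fun j _ => by ring
      _ = 1 / 2 * (μ x * frob (Ef v x) (Ef v x)) := by rw [hfr]; ring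
  -- the viscous integral
  have hB : (∫ x, ∑ i, ∑ j : Fin d,
      v x i * fderiv ℝ (fun y => μ y * Ef v y i j) x (Pi.single j 1))
      = - (1 / 2 * ∫ x : Fin d → ℝ, μ x * frob (Ef v x) (Ef v x)) := by
    rw [integral_finset_sum _ fun i _ => integrable_finset_sum _ fun j _ => intB i j]
    rw [Finset.sum_congr rfl fun i (_ : i ∈ Finset.univ) =>
      integral_finset_sum _ fun j _ => intB i j]
    rw [Finset.sum_congr rfl fun i (_ : i ∈ Finset.univ) =>
      Finset.sum_congr rfl fun j (_ : j ∈ Finset.univ) => ibp1 i j]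
    have h1 : ∑ i, ∑ j : Fin d, -(∫ x, jac v x i j * (μ x * Ef v x i j))
        = -(∑ i, ∑ j : Fin d, ∫ x, jac v x i j * (μ x * Ef v x i j)) := by
      simp
    rw [h1]
    have h2 : (∫ x, ∑ i, ∑ j : Fin d, jac v x i j * (μ x * Ef v x i j))
        = ∑ i, ∑ j : Fin d, ∫ x, jac v x i j * (μ x * Ef v x i j) := by
      rw [integral_finset_sum _ fun i _ => integrable_finset_sum _ fun j _ => intJ i j]
      exact Finset.sum_congr rfl fun i _ => integral_finset_sum _ fun j _ => intJ i j
    rw [← h2]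
    have h3 : (∫ x, ∑ i, ∑ j : Fin d, jac v x i j * (μ x * Ef v x i j))
        = ∫ x : Fin d → ℝ, 1 / 2 * (μ x * frob (Ef v x) (Ef v x)) := by
      exact integral_congr_ae (Filter.Eventually.of_forall fun x => hfro x)
    rw [h3, MeasureTheory.integral_const_mul]
  -- the pressure integral
  have hC : (∫ x, ∑ i : Fin d, v x i * fderiv ℝ p x (Pi.single i 1)) = 0 := by
    rw [integral_finset_sum _ fun i _ => intC i]
    rw [Finset.sum_congr rfl fun i (_ : i ∈ Finset.univ) => ibp2 i]
    have h1 : ∑ i : Fin d, -(∫ x, jac v x i i * p x)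
        = -(∑ i : Fin d, ∫ x, jac v x i i * p x) := by simp
    rw [h1]
    have h2 : (∫ x, ∑ i : Fin d, jac v x i i * p x)
        = ∑ i : Fin d, ∫ x, jac v x i i * p x :=
      integral_finset_sum _ fun i _ => intJp i
    rw [← h2]
    have h3 : (fun x => ∑ i : Fin d, jac v x i i * p x) = fun _ => (0 : ℝ) := by
      funext x
      rw [← Finset.sum_mul]
      have hx := hdiv x
      unfold divg at hx
      rw [hx, zero_mul]
    rw [h3]
    simp
  -- conclude
  rw [MeasureTheory.integral_const_mul] at hint
  rw [hB, hC] at hint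
  linarith
end

section
/- Let d ≥ 1, let μ : ℝ^d → ℝ be continuously differentiable with μ(x) ≥ μ_min > 0 for all x, let p : ℝ^d → ℝ be continuously differentiable, and let v : ℝ^d → ℝ^d be smooth and compactly supported with div v = 0 on ℝ^d. Write E(v) = ∇v + (∇v)ᵗ. If ∇·(μ E(v)) + ∇p = 0 holds pointwise on ℝ^d (the Stokes system with ω = 0), then v ≡ 0. -/
open MeasureTheory Matrix

/- ### Auxiliary lemmas -/

lemma fderiv_proj {E : Type*} [NormedAddCommGroup E] [NormedSpace ℝ E] {d : ℕ}
    {f : E → (Fin d → ℝ)} {x : E} (hf : DifferentiableAt ℝ f x) (i : Fin d) :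
    fderiv ℝ (fun y => f y i) x = (ContinuousLinearMap.proj i).comp (fderiv ℝ f x) :=
  ((ContinuousLinearMap.proj i : (Fin d → ℝ) →L[ℝ] ℝ).hasFDerivAt.comp x hf.hasFDerivAt).fderiv

lemma fderiv_proj' {E : Type*} [NormedAddCommGroup E] [NormedSpace ℝ E] {d : ℕ}
    {f : E → (Fin d → ℝ)} {x : E} (hf : DifferentiableAt ℝ f x) (i : Fin d) (u : E) :
    fderiv ℝ (fun y => f y i) x u = fderiv ℝ f x u i := by
  rw [fderiv_proj hf i]; rfl

lemma contDiff_fderiv_apply_s7 {d : ℕ} {v : (Fin d → ℝ) → (Fin d → ℝ)}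
    (hv : ContDiff ℝ (⊤ : ℕ∞) v) (i j : Fin d) :
    ContDiff ℝ (⊤ : ℕ∞) (fun y => fderiv ℝ v y (Pi.single j 1) i) := by
  have h1 : ContDiff ℝ (⊤ : ℕ∞) (fderiv ℝ v) := hv.fderiv_right (by simp)
  exact (((ContinuousLinearMap.proj i).comp
      (ContinuousLinearMap.apply ℝ (Fin d → ℝ) (Pi.single j 1))).contDiff).comp h1

lemma clm_eq_zero_of_basis {d : ℕ} (L : (Fin d → ℝ) →L[ℝ] ℝ)
    (h : ∀ j, L (Pi.single j 1) = 0) : L = 0 := by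
  apply ContinuousLinearMap.coe_injective
  apply LinearMap.pi_ext'
  intro j
  apply LinearMap.ext_ring
  simpa using h j

lemma fderiv_zero_off_tsupport {E F : Type*} [NormedAddCommGroup E] [NormedSpace ℝ E]
    [NormedAddCommGroup F] [NormedSpace ℝ F] {f : E → F} {x : E} (hx : x ∉ tsupport f) :
    fderiv ℝ f x = 0 := by
  by_contra h
  exact hx (support_fderiv_subset ℝ h)

/-- Integral of the divergence of a compactly supported `C¹` vector field vanishes. -/
lemma integral_divg_eq_zero {n : ℕ} (F : (Fin (n+1) → ℝ) → (Fin (n+1) → ℝ))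
    (hF : ContDiff ℝ 1 F) (hcF : HasCompactSupport F) :
    ∫ x, divg F x = 0 := by
  obtain ⟨R, hR⟩ := hcF.isCompact.isBounded.subset_closedBall 0
  set R' : ℝ := |R| + 1 with hR'
  have hRR' : R < R' := lt_of_le_of_lt (le_abs_self R) (by simp [hR'])
  set a : Fin (n+1) → ℝ := fun _ => -R' with ha
  set b : Fin (n+1) → ℝ := fun _ => R' with hb
  have hout : ∀ y : Fin (n+1) → ℝ, R' ≤ ‖y‖ → F y = 0 := by
    intro y hy
    apply image_eq_zero_of_notMem_tsupport
    intro hmem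
    have := hR hmem
    simp only [Metric.mem_closedBall, dist_zero_right] at this
    linarith
  have hdF : ∀ y : Fin (n+1) → ℝ, y ∉ Set.Icc a b → divg F y = 0 := by
    intro y hy
    have : y ∉ tsupport F := by
      intro hmem
      have h1 := hR hmem
      simp only [Metric.mem_closedBall, dist_zero_right] at h1
      apply hy
      constructor <;> intro i
      · have := (abs_le.1 ((norm_le_pi_norm y i).trans h1)).1
        simp only [ha]; linarith
      · have := (abs_le.1 ((norm_le_pi_norm y i).trans h1)).2
        simp only [hb]; linarith
    have h0 : fderiv ℝ F y = 0 := by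
      by_contra h
      exact this (support_fderiv_subset ℝ h)
    simp [divg, jac, h0]
  rw [← setIntegral_eq_integral_of_forall_compl_eq_zero (s := Set.Icc a b) hdF]
  have key := integral_divergence_of_hasFDerivAt_off_countable a b
    (by intro i; simp only [ha, hb]; linarith [abs_nonneg R])
    F (fun x => fderiv ℝ F x) ∅ Set.countable_empty
    (hF.continuous.continuousOn)
    (fun x _ => ((hF.differentiable (by simp)) x).hasFDerivAt)
    (by
      apply ContinuousOn.integrableOn_compact isCompact_Icc
      apply Continuous.continuousOn
      apply continuous_finset_sum
      intro i _
      have hcont : Continuous fun x => fderiv ℝ F x :=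
        (hF.fderiv_right (m := 0) (by norm_num)).continuous
      exact (continuous_apply i).comp (hcont.clm_apply continuous_const))
  have hface : ∀ (i : Fin (n+1)) (c : ℝ), |c| = R' →
      ∀ x : Fin n → ℝ, F (Fin.insertNth i c x) i = 0 := by
    intro i c hc x
    set pt : Fin (n+1) → ℝ := Fin.insertNth i c x with hpt
    have h1 : |pt i| = R' := by rw [hpt, Fin.insertNth_apply_same]; exact hc
    have h2 : R' ≤ ‖pt‖ := h1 ▸ norm_le_pi_norm pt i
    rw [hout pt h2]; rfl
  have hRpos : (0:ℝ) < R' := by simp [hR']; positivity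
  have : (∫ x in Set.Icc a b, ∑ i, fderiv ℝ F x (Pi.single i 1) i) = 0 := by
    rw [key]
    apply Finset.sum_eq_zero
    intro i _
    rw [setIntegral_congr_fun measurableSet_Icc
        (g := fun _ => (0:ℝ)) (fun x _ => hface i (b i) (by simp [hb, abs_of_pos hRpos]) x),
      setIntegral_congr_fun measurableSet_Icc
        (g := fun _ => (0:ℝ)) (fun x _ => hface i (a i) (by simp [ha, abs_of_pos hRpos]) x)]
    simp
  rw [← this]
  rfl

/-- Sum rearrangement for the divergence computation. -/
lemma alg_sum {m : ℕ} (V G : Fin m → ℝ) (q : ℝ) (D Q J : Fin m → Fin m → ℝ) (c : ℝ) :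
    ∑ j, ((∑ i, (V i * D i j + (c * Q i j) * J i j)) + (q * J j j + V j * G j))
      = (∑ i, V i * (∑ j, D i j)) + c * (∑ i, ∑ j, Q i j * J i j)
        + q * (∑ j, J j j) + ∑ j, V j * G j := by
  have hA : ∑ j : Fin m, ∑ i : Fin m, V i * D i j = ∑ i : Fin m, V i * ∑ j : Fin m, D i j := by
    rw [Finset.sum_comm]
    exact Finset.sum_congr rfl fun i _ => (Finset.mul_sum _ _ _).symm
  have hB : ∑ j : Fin m, ∑ i : Fin m, c * Q i j * J i j
      = c * ∑ i : Fin m, ∑ j : Fin m, Q i j * J i j := by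
    rw [Finset.sum_comm, Finset.mul_sum]
    refine Finset.sum_congr rfl fun i _ => ?_
    rw [Finset.mul_sum]
    exact Finset.sum_congr rfl fun j _ => by ring
  have hC : ∑ j : Fin m, q * J j j = q * ∑ j : Fin m, J j j := (Finset.mul_sum _ _ _).symm
  simp only [Finset.sum_add_distrib]
  rw [hA, hB, hC]
  ring

/-- Rigidity: a smooth compactly supported field with `E(v) = 0` vanishes. -/
lemma rigid {d : ℕ} (hd : 1 ≤ d) (v : (Fin d → ℝ) → (Fin d → ℝ))
    (hv : ContDiff ℝ (⊤ : ℕ∞) v) (hcv : HasCompactSupport v)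
    (hE : ∀ y i j, fderiv ℝ v y (Pi.single j 1) i + fderiv ℝ v y (Pi.single i 1) j = 0) :
    ∀ y, v y = 0 := by
  have hdv : Differentiable ℝ v := hv.differentiable (by simp)
  set g : Fin d → Fin d → (Fin d → ℝ) → ℝ :=
    fun i j z => fderiv ℝ (fun w => v w i) z (Pi.single j 1) with hgdef
  have hgeq : ∀ i j z, g i j z = fderiv ℝ v z (Pi.single j 1) i :=
    fun i j z => fderiv_proj' (hdv z) i (Pi.single j 1)
  have hφ : ∀ i, ContDiff ℝ (⊤ : ℕ∞) (fun w => v w i) :=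
    fun i => (ContinuousLinearMap.proj i : (Fin d → ℝ) →L[ℝ] ℝ).contDiff.comp hv
  have hφd : ∀ i, Differentiable ℝ (fun w => v w i) := fun i => (hφ i).differentiable (by simp)
  have hgsm : ∀ i j, ContDiff ℝ (⊤ : ℕ∞) (g i j) := by
    intro i j
    have := contDiff_fderiv_apply_s7 hv i j
    have heq : g i j = fun y => fderiv ℝ v y (Pi.single j 1) i := funext fun z => hgeq i j z
    rw [heq]; exact this
  have hf'' : ∀ (i : Fin d) (y : Fin d → ℝ),
      HasFDerivAt (fderiv ℝ (fun w => v w i)) (fderiv ℝ (fderiv ℝ (fun w => v w i)) y) y := by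
    intro i y
    exact (((hφ i).fderiv_right (m := 1) (WithTop.coe_le_coe.mpr le_top)).differentiable (by simp) y).hasFDerivAt
  have hDrepr : ∀ (i j : Fin d) (y : Fin d → ℝ),
      fderiv ℝ (g i j) y =
        (ContinuousLinearMap.apply ℝ ℝ (Pi.single j 1 : Fin d → ℝ)).comp
          (fderiv ℝ (fderiv ℝ (fun w => v w i)) y) := by
    intro i j y
    exact ((ContinuousLinearMap.apply ℝ ℝ (Pi.single j 1 : Fin d → ℝ)).hasFDerivAt.comp y
      (hf'' i y)).fderiv
  have hsym : ∀ (i j k : Fin d) (y : Fin d → ℝ),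
      fderiv ℝ (g i j) y (Pi.single k 1) = fderiv ℝ (g i k) y (Pi.single j 1) := by
    intro i j k y
    rw [hDrepr i j y, hDrepr i k y]
    exact second_derivative_symmetric (f := fun w => v w i)
      (fun z => (hφd i z).hasFDerivAt) (hf'' i y) _ _
  have hanti : ∀ (i j k : Fin d) (y : Fin d → ℝ),
      fderiv ℝ (g i j) y (Pi.single k 1) = -(fderiv ℝ (g j i) y (Pi.single k 1)) := by
    intro i j k y
    have heqf : g i j = fun z => -(g j i z) := by
      funext z
      rw [hgeq, hgeq]
      have := hE z i j
      linarith
    rw [heqf, fderiv_fun_neg]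
    simp
  have hD0 : ∀ (i j k : Fin d) (y : Fin d → ℝ), fderiv ℝ (g i j) y (Pi.single k 1) = 0 := by
    intro i j k y
    have h1 := hanti i j k y
    have h2 := hsym j i k y
    have h3 := hanti j k i y
    have h4 := hsym k j i y
    have h5 := hanti k i j y
    have h6 := hsym i k j y
    linarith
  have hgconst : ∀ i j (y z : Fin d → ℝ), g i j y = g i j z := by
    intro i j
    apply is_const_of_fderiv_eq_zero ((hgsm i j).differentiable (by simp))
    intro y
    exact clm_eq_zero_of_basis _ (fun k => hD0 i j k y)
  obtain ⟨R, hR⟩ := hcv.isCompact.isBounded.subset_closedBall 0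
  set i0 : Fin d := ⟨0, hd⟩
  set x₀ : Fin d → ℝ := fun _ => |R| + 1 with hx₀
  have hx₀out : x₀ ∉ tsupport v := by
    intro hmem
    have h1 := hR hmem
    simp only [Metric.mem_closedBall, dist_zero_right] at h1
    have h2 : |x₀ i0| ≤ ‖x₀‖ := norm_le_pi_norm x₀ i0
    rw [hx₀] at h2
    simp only [abs_of_pos (by positivity : (0:ℝ) < |R| + 1)] at h2
    have := le_abs_self R
    linarith
  have hg0 : ∀ i j, g i j x₀ = 0 := by
    intro i j
    rw [hgeq, fderiv_zero_off_tsupport hx₀out]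
    rfl
  have hgzero : ∀ i j y, g i j y = 0 := fun i j y => (hgconst i j y x₀).trans (hg0 i j)
  intro y
  funext i
  have hφconst : ∀ (z w : Fin d → ℝ), v z i = v w i := by
    apply is_const_of_fderiv_eq_zero (hφd i)
    intro z
    exact clm_eq_zero_of_basis _ (fun j => hgzero i j z)
  have : v x₀ = 0 := image_eq_zero_of_notMem_tsupport hx₀out
  calc v y i = v x₀ i := hφconst y x₀
    _ = 0 := by rw [this]; rfl

/-- Uniqueness for the Stokes system with `ω = 0`: if `μ ≥ μ_min > 0`, `v` is smooth,
compactly supported, divergence free, and `∇·(μ E(v)) + ∇p = 0` on `ℝ^d`, then `v ≡ 0`. -/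
theorem stokes_uniqueness (d : ℕ) (hd : 1 ≤ d) (μmin : ℝ) (hμmin : 0 < μmin)
    (μ p : (Fin d → ℝ) → ℝ) (hμ : ContDiff ℝ 1 μ) (hp : ContDiff ℝ 1 p)
    (hlb : ∀ x, μmin ≤ μ x)
    (v : (Fin d → ℝ) → (Fin d → ℝ)) (hv : ContDiff ℝ (⊤ : ℕ∞) v) (hcv : HasCompactSupport v)
    (hdiv : ∀ x, divg v x = 0)
    (heq : ∀ x : Fin d → ℝ, divMat (fun y => μ y • Ef v y) x + gradf p x = 0) :
    ∀ x, v x = 0 := by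
  obtain ⟨n, rfl⟩ : ∃ n, d = n + 1 := ⟨d - 1, (Nat.succ_pred_eq_of_pos hd).symm⟩
  have hdv : Differentiable ℝ v := hv.differentiable (by simp)
  have hjsm : ∀ i j, ContDiff ℝ (⊤ : ℕ∞) (fun y => jac v y i j) := fun i j =>
    contDiff_fderiv_apply_s7 hv i j
  have hEentry : ∀ (y : Fin (n+1) → ℝ) i j, Ef v y i j = jac v y i j + jac v y j i := by
    intro y i j
    simp [Ef, Matrix.transpose_apply]
  have hEsm : ∀ i j, ContDiff ℝ (⊤ : ℕ∞) (fun y => Ef v y i j) := by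
    intro i j
    have h : (fun y => Ef v y i j) = fun y => jac v y i j + jac v y j i :=
      funext fun y => hEentry y i j
    rw [h]; exact (hjsm i j).add (hjsm j i)
  have hA : ∀ i j, ContDiff ℝ 1 (fun y => μ y * Ef v y i j) :=
    fun i j => hμ.mul ((hEsm i j).of_le (by simp))
  have hvi : ∀ i, ContDiff ℝ (⊤ : ℕ∞) (fun y => v y i) :=
    fun i => (ContinuousLinearMap.proj i : (Fin (n+1) → ℝ) →L[ℝ] ℝ).contDiff.comp hv
  set F : (Fin (n+1) → ℝ) → (Fin (n+1) → ℝ) :=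
    fun y j => (∑ i, v y i * (μ y * Ef v y i j)) + p y * v y j with hFdef
  have hF1 : ContDiff ℝ 1 F := by
    apply contDiff_pi.2
    intro j
    exact (ContDiff.sum fun i _ => ((hvi i).of_le (by simp)).mul (hA i j)).add
      (hp.mul ((hvi j).of_le (by simp)))
  have hFc : HasCompactSupport F := by
    apply hcv.mono'
    intro y hy
    simp only [Function.mem_support] at hy
    by_contra hns
    apply hy
    have hv0 : v y = 0 := image_eq_zero_of_notMem_tsupport hns
    funext j
    simp [hFdef, hv0]
  have hDA : ∀ i j (y : Fin (n+1) → ℝ), DifferentiableAt ℝ (fun z => μ z * Ef v z i j) y :=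
    fun i j y => ((hA i j).differentiable (by simp)) y
  have hDvi : ∀ i (y : Fin (n+1) → ℝ), DifferentiableAt ℝ (fun z => v z i) y :=
    fun i y => ((hvi i).differentiable (by simp)) y
  have hDp : Differentiable ℝ p := hp.differentiable (by simp)
  have hkey : ∀ y, divg F y = μ y * frob (Ef v y) (jac v y) := by
    intro y
    have hDF : DifferentiableAt ℝ F y := (hF1.differentiable (by simp)) y
    have h1 : divg F y = ∑ j, fderiv ℝ (fun z => F z j) y (Pi.single j 1) :=
      Finset.sum_congr rfl fun j _ => (fderiv_proj' hDF j _).symm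
    have h2 : ∀ j, fderiv ℝ (fun z => F z j) y (Pi.single j 1) =
        (∑ i, (v y i * fderiv ℝ (fun z => μ z * Ef v z i j) y (Pi.single j 1)
          + (μ y * Ef v y i j) * jac v y i j))
        + (p y * jac v y j j + v y j * gradf p y j) := by
      intro j
      have e1 : (fun z => F z j) =
          fun z => (∑ i, v z i * (μ z * Ef v z i j)) + p z * v z j := rfl
      rw [e1, fderiv_fun_add (DifferentiableAt.fun_sum fun i _ => (hDvi i y).fun_mul (hDA i j y))
          ((hDp y).fun_mul (hDvi j y)),
        fderiv_fun_sum (fun i _ => (hDvi i y).fun_mul (hDA i j y)),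
        fderiv_fun_mul (hDp y) (hDvi j y),
        Finset.sum_congr rfl (fun i _ => fderiv_fun_mul (hDvi i y) (hDA i j y))]
      simp only [ContinuousLinearMap.add_apply, ContinuousLinearMap.coe_sum',
        Finset.sum_apply, ContinuousLinearMap.smul_apply, smul_eq_mul]
      congr 1
      · refine Finset.sum_congr rfl fun i _ => ?_
        rw [fderiv_proj' (hdv y) i]
        rfl
      · rw [fderiv_proj' (hdv y) j]
        rfl
    have hstep : divg F y =
        (∑ i, v y i * (∑ j, fderiv ℝ (fun z => μ z * Ef v z i j) y (Pi.single j 1)))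
        + μ y * (∑ i, ∑ j, Ef v y i j * jac v y i j)
        + p y * (∑ j, jac v y j j) + ∑ j, v y j * gradf p y j := by
      rw [h1, Finset.sum_congr rfl fun j _ => h2 j]
      exact alg_sum (fun i => v y i) (fun j => gradf p y j) (p y)
        (fun i j => fderiv ℝ (fun z => μ z * Ef v z i j) y (Pi.single j 1))
        (fun i j => Ef v y i j) (fun i j => jac v y i j) (μ y)
    have hDsum : ∀ i, (∑ j, fderiv ℝ (fun z => μ z * Ef v z i j) y (Pi.single j 1))
        = divMat (fun z => μ z • Ef v z) y i := by
      intro i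
      rfl
    have hdm : ∀ i, divMat (fun z => μ z • Ef v z) y i = - gradf p y i := by
      intro i
      have h := congr_fun (heq y) i
      simp only [Pi.add_apply, Pi.zero_apply] at h
      linarith
    have hdivv : (∑ j, jac v y j j) = 0 := hdiv y
    have hcancel : (∑ i, v y i * -gradf p y i) + ∑ j, v y j * gradf p y j = 0 := by
      rw [← Finset.sum_add_distrib]
      exact Finset.sum_eq_zero fun i _ => by ring
    rw [hstep, Finset.sum_congr rfl fun i _ => by rw [hDsum i, hdm i], hdivv]
    have hfr : frob (Ef v y) (jac v y) = ∑ i, ∑ j, Ef v y i j * jac v y i j := rfl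
    rw [hfr]
    linarith [hcancel]
  -- integrate
  have h0 : ∫ y, divg F y = 0 := integral_divg_eq_zero F hF1 hFc
  have hint : ∫ y, μ y * frob (Ef v y) (jac v y) = 0 := by
    rw [← h0]
    exact integral_congr_ae (Filter.Eventually.of_forall fun y => (hkey y).symm)
  have hfrob : ∀ y, frob (Ef v y) (jac v y) = (1/2) * ∑ i, ∑ j, (Ef v y i j)^2 := by
    intro y
    have hswap : ∑ i, ∑ j, Ef v y i j * jac v y j i = ∑ i, ∑ j, Ef v y i j * jac v y i j := by
      rw [Finset.sum_comm]
      refine Finset.sum_congr rfl fun i _ => Finset.sum_congr rfl fun j _ => ?_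
      rw [hEentry y j i, hEentry y i j]
      ring
    have hsq : ∑ i, ∑ j, (Ef v y i j)^2
        = (∑ i, ∑ j, Ef v y i j * jac v y i j) + ∑ i, ∑ j, Ef v y i j * jac v y j i := by
      rw [← Finset.sum_add_distrib]
      refine Finset.sum_congr rfl fun i _ => ?_
      rw [← Finset.sum_add_distrib]
      refine Finset.sum_congr rfl fun j _ => ?_
      rw [hEentry y i j]
      ring
    have hfr : frob (Ef v y) (jac v y) = ∑ i, ∑ j, Ef v y i j * jac v y i j := rfl
    rw [hfr]
    rw [hswap] at hsq
    linarith
  have hcontE : ∀ i j, Continuous (fun y => Ef v y i j) := fun i j => (hEsm i j).continuous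
  have hcontJ : ∀ i j, Continuous (fun y => jac v y i j) := fun i j => (hjsm i j).continuous
  have hcont : Continuous fun y => μ y * frob (Ef v y) (jac v y) := by
    apply hμ.continuous.mul
    exact continuous_finset_sum _ fun i _ =>
      continuous_finset_sum _ fun j _ => (hcontE i j).mul (hcontJ i j)
  have hsupp : HasCompactSupport fun y => μ y * frob (Ef v y) (jac v y) := by
    apply hcv.mono'
    intro y hy
    simp only [Function.mem_support] at hy
    by_contra hns
    apply hy
    have hjz : ∀ i j, jac v y i j = 0 := by
      intro i j
      show fderiv ℝ v y (Pi.single j 1) i = 0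
      rw [fderiv_zero_off_tsupport hns]
      rfl
    have : frob (Ef v y) (jac v y) = 0 := by
      refine Finset.sum_eq_zero fun i _ => Finset.sum_eq_zero fun j _ => ?_
      rw [hjz i j, mul_zero]
    rw [this, mul_zero]
  have hinteg : Integrable fun y => μ y * frob (Ef v y) (jac v y) :=
    hcont.integrable_of_hasCompactSupport hsupp
  have hnn : 0 ≤ fun y => μ y * frob (Ef v y) (jac v y) := by
    intro y
    have h1 : 0 < μ y := lt_of_lt_of_le hμmin (hlb y)
    have h2 : 0 ≤ frob (Ef v y) (jac v y) := by
      rw [hfrob y]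
      positivity
    exact mul_nonneg h1.le h2
  have hae := (integral_eq_zero_iff_of_nonneg hnn hinteg).mp hint
  have hzero : (fun y => μ y * frob (Ef v y) (jac v y)) = 0 :=
    (Continuous.ae_eq_iff_eq volume hcont continuous_const).mp hae
  have hEzero : ∀ y i j, Ef v y i j = 0 := by
    intro y i j
    have h1 : μ y * frob (Ef v y) (jac v y) = 0 := congr_fun hzero y
    have hμy : 0 < μ y := lt_of_lt_of_le hμmin (hlb y)
    have h2 : frob (Ef v y) (jac v y) = 0 := (mul_eq_zero.mp h1).resolve_left hμy.ne'
    rw [hfrob y] at h2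
    have h3 : ∑ i, ∑ j, (Ef v y i j)^2 = 0 := by linarith
    have h4 := (Finset.sum_eq_zero_iff_of_nonneg
      (fun i _ => Finset.sum_nonneg fun j _ => sq_nonneg _)).mp h3 i (Finset.mem_univ i)
    have h5 := (Finset.sum_eq_zero_iff_of_nonneg (fun j _ => sq_nonneg _)).mp h4 j
      (Finset.mem_univ j)
    exact pow_eq_zero_iff (by norm_num) |>.mp h5
  apply rigid hd v hv hcv
  intro y i j
  have h := hEzero y i j
  rw [hEentry y i j] at h
  exact h
end

section
/- Let a, b, c ∈ ℝ with a > 0, and let f : ℝ → ℂ be twice continuously differentiable. Suppose a f''(z) + i b f'(z) + c f(z) = 0 for all z ≥ 0, f(0) = 0, and f(z) → 0 as z → +∞. Then f(z) = 0 for all z ≥ 0. -/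
/-!
Multiplying by the unimodular factor `exp (i κ z)`, `κ = b / 2a`, turns the equation into
`g'' = -μ g` with `μ = c / a + κ²` real, without changing `|f|`. For such `g` the energy
`|g'|² + μ |g|²` is conserved, so `h = |g|²` satisfies `h'' = 2 |g'(0)|² - 4 μ h`. Since `h → 0`,
`h''` tends to `2 |g'(0)|²`, and a positive limit would force `h → ∞`; hence `g'(0) = 0`, and `g`
vanishes by uniqueness for a linear equation with zero Cauchy data.
-/

open Filter Set Topology Complex

theorem tendsto_atTop_of_hasDerivAt_of_eventually_ge {g g' : ℝ → ℝ} {ε : ℝ} (hε : 0 < ε)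
    (hg : ∀ᶠ x in atTop, HasDerivAt g (g' x) x) (hg' : ∀ᶠ x in atTop, ε ≤ g' x) :
    Tendsto g atTop atTop := by
  obtain ⟨Z, hZ⟩ := eventually_atTop.mp (hg.and hg')
  have hlower : ∀ x, Z ≤ x → ε * (x - Z) + g Z ≤ g x := by
    intro x hx
    have hint : ∀ y ∈ interior (Ici Z), Z ≤ y := fun y hy => interior_subset hy
    have := (convex_Ici Z).mul_sub_le_image_sub_of_le_deriv
      (fun y hy => (hZ y hy).1.continuousAt.continuousWithinAt)
      (fun y hy => (hZ y (hint y hy)).1.differentiableAt.differentiableWithinAt)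
      (fun y hy => (hZ y (hint y hy)).1.deriv ▸ (hZ y (hint y hy)).2) Z self_mem_Ici x hx hx
    linarith
  refine tendsto_atTop_mono' atTop (eventually_atTop.mpr ⟨Z, hlower⟩) ?_
  exact tendsto_atTop_add_const_right _ _
    ((tendsto_id.atTop_add tendsto_const_nhds).const_mul_atTop hε)

theorem eq_of_hasDerivAt_zero_of_le {F : Type*} [NormedAddCommGroup F] [NormedSpace ℝ F]
    {g : ℝ → F} {a : ℝ} (hg : ∀ x, a ≤ x → HasDerivAt g 0 x) {x : ℝ} (hx : a ≤ x) :
    g x = g a :=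
  constant_of_has_deriv_right_zero (fun y hy => (hg y hy.1).continuousAt.continuousWithinAt)
    (fun y hy => (hg y hy.1).hasDerivWithinAt) x ⟨hx, le_rfl⟩

theorem HasDerivAt.cexp_ofReal_mul_I_mul {f : ℝ → ℂ} {f' : ℂ} {x : ℝ} (κ : ℝ)
    (hf : HasDerivAt f f' x) :
    HasDerivAt (fun y : ℝ => cexp (κ * y * I) * f y)
      (cexp (κ * x * I) * (f' + κ * I * f x)) x := by
  have he : HasDerivAt (fun y : ℝ => cexp (κ * y * I)) (cexp (κ * x * I) * (κ * I)) x :=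
    (((hasDerivAt_id (x : ℂ)).const_mul (κ : ℂ)).mul_const I).cexp.comp_ofReal.congr_deriv
      (by simp)
  exact (he.mul hf).congr_deriv (by ring)

namespace SecondOrderODE

theorem eq_zero_of_initial_eq_zero {E : Type*} [NormedAddCommGroup E] [NormedSpace ℝ E]
    (A : E →L[ℝ] E) {u u' : ℝ → E}
    (hu : ∀ x, 0 ≤ x → HasDerivAt u (u' x) x) (hu' : ∀ x, 0 ≤ x → HasDerivAt u' (A (u x)) x)
    (h0 : u 0 = 0) (h0' : u' 0 = 0) {x : ℝ} (hx : 0 ≤ x) : u x = 0 := by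
  set L : E × E →L[ℝ] E × E :=
    (ContinuousLinearMap.snd ℝ E E).prod (A.comp (ContinuousLinearMap.fst ℝ E E))
  have hY : ∀ y, 0 ≤ y → HasDerivAt (fun t => (u t, u' t)) (L (u y, u' y)) y :=
    fun y hy => (hu y hy).prodMk (hu' y hy)
  have := eq_zero_of_abs_deriv_le_mul_abs_self_of_eq_zero_right
    (fun y hy => (hY y hy.1).continuousAt.continuousWithinAt)
    (fun y hy => (hY y hy.1).hasDerivWithinAt) (by simp [h0, h0'])
    (fun y _ => L.le_opNorm _) x ⟨hx, le_rfl⟩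
  exact congrArg Prod.fst this

variable {E : Type*} [NormedAddCommGroup E] [InnerProductSpace ℝ E] {μ : ℝ} {u u' : ℝ → E}

theorem norm_sq_deriv_add_mul_norm_sq_eq (hu : ∀ x, 0 ≤ x → HasDerivAt u (u' x) x)
    (hu' : ∀ x, 0 ≤ x → HasDerivAt u' (-μ • u x) x) {x : ℝ} (hx : 0 ≤ x) :
    ‖u' x‖ ^ 2 + μ * ‖u x‖ ^ 2 = ‖u' 0‖ ^ 2 + μ * ‖u 0‖ ^ 2 := by
  refine eq_of_hasDerivAt_zero_of_le (g := fun t => ‖u' t‖ ^ 2 + μ * ‖u t‖ ^ 2)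
    (fun y hy => ?_) hx
  refine ((hu' y hy).norm_sq.add ((hu y hy).norm_sq.const_mul μ)).congr_deriv ?_
  rw [inner_smul_right, real_inner_comm]
  ring

theorem hasDerivAt_two_inner (hu : ∀ x, 0 ≤ x → HasDerivAt u (u' x) x)
    (hu' : ∀ x, 0 ≤ x → HasDerivAt u' (-μ • u x) x) {x : ℝ} (hx : 0 ≤ x) :
    HasDerivAt (fun t => 2 * inner ℝ (u t) (u' t)) (2 * (‖u' x‖ ^ 2 - μ * ‖u x‖ ^ 2)) x := by
  refine (((hu x hx).inner ℝ (hu' x hx)).const_mul 2).congr_deriv ?_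
  rw [inner_smul_right, real_inner_self_eq_norm_sq, real_inner_self_eq_norm_sq]
  ring

theorem initial_deriv_eq_zero_of_tendsto_zero (hu : ∀ x, 0 ≤ x → HasDerivAt u (u' x) x)
    (hu' : ∀ x, 0 ≤ x → HasDerivAt u' (-μ • u x) x) (h0 : u 0 = 0)
    (hlim : Tendsto u atTop (𝓝 0)) : u' 0 = 0 := by
  by_contra hne
  set e := ‖u' 0‖ ^ 2
  have he : 0 < e := by positivity
  have hsq : Tendsto (fun t => ‖u t‖ ^ 2) atTop (𝓝 0) := by
    simpa using (tendsto_norm.comp hlim).pow 2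
  have hsecond : ∀ x, 0 ≤ x →
      2 * (‖u' x‖ ^ 2 - μ * ‖u x‖ ^ 2) = 2 * e - 4 * μ * ‖u x‖ ^ 2 := by
    intro x hx
    have := norm_sq_deriv_add_mul_norm_sq_eq hu hu' hx
    rw [h0, norm_zero] at this
    linarith
  have hsecond_lim : Tendsto (fun x => 2 * e - 4 * μ * ‖u x‖ ^ 2) atTop (𝓝 (2 * e)) := by
    simpa using tendsto_const_nhds.sub (hsq.const_mul (4 * μ))
  have hfirst_top : Tendsto (fun t => 2 * inner ℝ (u t) (u' t)) atTop atTop :=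
    tendsto_atTop_of_hasDerivAt_of_eventually_ge he
      ((eventually_ge_atTop 0).mono fun x hx => hsecond x hx ▸ hasDerivAt_two_inner hu hu' hx)
      (hsecond_lim.eventually_const_le (by linarith))
  have hsq_top : Tendsto (fun t => ‖u t‖ ^ 2) atTop atTop :=
    tendsto_atTop_of_hasDerivAt_of_eventually_ge one_pos
      ((eventually_ge_atTop 0).mono fun x hx => (hu x hx).norm_sq)
      (hfirst_top.eventually_ge_atTop 1)
  exact not_tendsto_atTop_of_tendsto_nhds hsq hsq_top

theorem eq_zero_of_tendsto_zero (hu : ∀ x, 0 ≤ x → HasDerivAt u (u' x) x)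
    (hu' : ∀ x, 0 ≤ x → HasDerivAt u' (-μ • u x) x) (h0 : u 0 = 0)
    (hlim : Tendsto u atTop (𝓝 0)) {x : ℝ} (hx : 0 ≤ x) : u x = 0 :=
  eq_zero_of_initial_eq_zero (-μ • ContinuousLinearMap.id ℝ E) hu (by simpa using hu') h0
    (initial_deriv_eq_zero_of_tendsto_zero hu hu' h0 hlim) hx

end SecondOrderODE

/-- Lopatinskii condition verification (3D): the only solution of
`a f'' + i b f' + c f = 0` on `[0, ∞)` (with `a, b, c` real, `a > 0`) which vanishes at
`z = 0` and decays at `+∞` is the trivial one. -/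
theorem lopatinskii_ode_3d (a b c : ℝ) (ha : 0 < a) (f : ℝ → ℂ) (hf : ContDiff ℝ 2 f)
    (heq : ∀ z : ℝ, 0 ≤ z →
      (a : ℂ) * deriv (deriv f) z + Complex.I * (b : ℂ) * deriv f z + (c : ℂ) * f z = 0)
    (h0 : f 0 = 0) (hlim : Tendsto f atTop (nhds 0)) :
    ∀ z : ℝ, 0 ≤ z → f z = 0 := by
  have hf' : ∀ x, HasDerivAt f (deriv f x) x := fun x =>
    (hf.differentiable two_ne_zero x).hasDerivAt
  have hf'' : ∀ x, HasDerivAt (deriv f) (deriv (deriv f) x) x := fun x =>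
    ((hf.iterate_deriv' 1 1).differentiable one_ne_zero x).hasDerivAt
  have ha' : (a : ℂ) ≠ 0 := by exact_mod_cast ha.ne'
  set κ : ℝ := b / (2 * a)
  have hκ : (κ : ℂ) * (2 * a) = b := by push_cast [κ]; field_simp
  have hg' : ∀ x : ℝ, 0 ≤ x →
      HasDerivAt (fun y : ℝ => cexp (κ * y * I) * (deriv f y + κ * I * f y))
        (-(c / a + κ ^ 2) • (cexp (κ * x * I) * f x)) x := by
    intro x hx
    refine (((hf'' x).add ((hf' x).const_mul (κ * I))).cexp_ofReal_mul_I_mul κ).congr_deriv ?_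
    simp only [Pi.add_apply, real_smul]
    push_cast
    field_simp
    linear_combination heq x hx + I * deriv f x * hκ + κ ^ 2 * a * f x * I_sq
  have hglim : Tendsto (fun y : ℝ => cexp (κ * y * I) * f y) atTop (𝓝 0) := by
    rw [tendsto_zero_iff_norm_tendsto_zero]
    simpa [Complex.norm_exp] using hlim.norm
  intro z hz
  simpa [exp_ne_zero] using SecondOrderODE.eq_zero_of_tendsto_zero
    (fun x _ => (hf' x).cexp_ofReal_mul_I_mul κ) hg' (by simp [h0]) hglim hz
end
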